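/- arXiv:2202.06799 — 3 statements merged into one kernel-verified Lean document; each statement's English description precedes it below -/
import Mathlib

section
/- Let X be a real random variable and β ∈ (0,4). If P(X > V) ≤ C₁ e^{−4t} e^{−4V} · e^{8t} for all V ∈ ℝ (i.e. P(X>V) ≤ C₁ e^{4t−4V}), and P(X > V) ≤ C₂ e^{−V²/t}/√t for all V ∈ [βt/8, (3+β/4)t/2], then E[e^{βX}] ≤ C(β) e^{β² t/4} for some constant C(β) depending only on β, C₁, C₂, uniformly in t ≥ 1. -/
/-!
By the layer cake formula, `E[exp (β X)] ≤ exp (β V₁) + ∫_{V₁}^∞ β exp (β v) P(X > v) dv`.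
On `[V₁, V₂]` the Gaussian tail bound turns the integrand into `exp (β v - v² / t)`, whose
integral over all of `ℝ` is `√(π t) exp (β² t / 4)` by completing the square. Beyond
`V₂ = (3 / 2 + β / 8) t` the bound `P(X > v) ≤ C₁ exp (4 t - 4 v)` leaves an exponentially
decaying integrand, of total size `≍ exp (4 t - (4 - β) V₂) ≤ exp (β² t / 4)`, and the starting
point `V₁ = β t / 8` costs only `exp (β² t / 8)`.
-/

open MeasureTheory Set Real

lemma lintegral_Ioi_ofReal_exp_mul {a : ℝ} (ha : a < 0) (c : ℝ) :
    ∫⁻ x in Ioi c, ENNReal.ofReal (exp (a * x)) = ENNReal.ofReal (-exp (a * c) / a) := by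
  rw [← integral_exp_mul_Ioi ha c, ofReal_integral_eq_lintegral_ofReal
    (integrableOn_exp_mul_Ioi ha c) (.of_forall fun _ => (exp_pos _).le)]

lemma exp_mul_sub_sq_div_eq (β : ℝ) {t : ℝ} (ht : t ≠ 0) (v : ℝ) :
    exp (β * v - v ^ 2 / t) = exp (β ^ 2 * t / 4) * exp (-(1 / t) * (v - β * t / 2) ^ 2) := by
  rw [← exp_add]
  congr 1
  field_simp
  ring

lemma lintegral_ofReal_exp_mul_sub_sq_div (β : ℝ) {t : ℝ} (ht : 0 < t) :
    ∫⁻ v, ENNReal.ofReal (exp (β * v - v ^ 2 / t)) =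
      ENNReal.ofReal (exp (β ^ 2 * t / 4) * √(π * t)) := by
  have hint : Integrable fun v : ℝ => exp (-(1 / t) * (v - β * t / 2) ^ 2) :=
    (integrable_exp_neg_mul_sq (by positivity)).comp_sub_right _
  simp_rw [exp_mul_sub_sq_div_eq β ht.ne', ENNReal.ofReal_mul (exp_pos _).le]
  rw [lintegral_const_mul' _ _ ENNReal.ofReal_ne_top,
    ← ofReal_integral_eq_lintegral_ofReal hint (.of_forall fun _ => (exp_pos _).le),
    integral_sub_right_eq_self (fun x => exp (-(1 / t) * x ^ 2)), integral_gaussian, one_div,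
    div_inv_eq_mul]

section

variable {Ω : Type*} [MeasurableSpace Ω] (μ : Measure Ω) {X : Ω → ℝ}

lemma lintegral_ofReal_exp_mul_le (hX : AEMeasurable X μ) {β : ℝ} (hβ : 0 ≤ β) (V₀ : ℝ) :
    ∫⁻ ω, ENNReal.ofReal (exp (β * X ω)) ∂μ ≤
      ENNReal.ofReal (exp (β * V₀)) * μ univ +
        ∫⁻ v in Ioi V₀, μ {ω | v < X ω} * ENNReal.ofReal (β * exp (β * v)) := by
  set g : ℝ → ℝ := fun v => β * exp (β * (v + V₀))
  have hg : Continuous g := by fun_prop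
  have hG (y : ℝ) : ∫ v in 0..y, g v = exp (β * (y + V₀)) - exp (β * V₀) := by
    rw [intervalIntegral.integral_eq_sub_of_hasDerivAt (f := fun v => exp (β * (v + V₀)))
      (fun v _ => ?_) (hg.intervalIntegrable _ _), zero_add]
    simpa [g, mul_comm] using (((hasDerivAt_id v).add_const V₀).const_mul β).exp
  have hpt (ω : Ω) : ENNReal.ofReal (exp (β * X ω)) ≤
      ENNReal.ofReal (exp (β * V₀)) + ENNReal.ofReal (∫ v in 0..(max (X ω) V₀ - V₀), g v) := by
    rw [hG, sub_add_cancel, ← ENNReal.ofReal_add (exp_pos _).le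
      (sub_nonneg.2 (exp_le_exp.2 (by gcongr; exact le_max_right _ _))), add_sub_cancel]
    exact ENNReal.ofReal_le_ofReal (exp_le_exp.2 (by gcongr; exact le_max_left _ _))
  have hlayer := lintegral_comp_eq_lintegral_meas_lt_mul μ (f := fun ω => max (X ω) V₀ - V₀)
    (.of_forall fun ω => by simp) (by fun_prop) (fun s _ => hg.intervalIntegrable 0 s)
    (.of_forall fun v => by positivity)
  have hshift : ∫⁻ v in Ioi 0, μ {ω | v < max (X ω) V₀ - V₀} * ENNReal.ofReal (g v) =
      ∫⁻ v in Ioi V₀, μ {ω | v < X ω} * ENNReal.ofReal (β * exp (β * v)) := by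
    have hmem : EqOn (fun v => μ {ω | v < max (X ω) V₀ - V₀} * ENNReal.ofReal (g v))
        (fun v => μ {ω | v + V₀ < X ω} * ENNReal.ofReal (β * exp (β * (v + V₀)))) (Ioi 0) := by
      intro v (hv : 0 < v)
      simp only [lt_sub_iff_add_lt, lt_max_iff, (lt_add_of_pos_left V₀ hv).not_gt, or_false, g]
    have hpre : Ioi (0 : ℝ) = (· + V₀) ⁻¹' Ioi V₀ := by rw [preimage_add_const_Ioi, sub_self]
    rw [setLIntegral_congr_fun measurableSet_Ioi hmem, hpre]
    exact (measurePreserving_add_right volume V₀).setLIntegral_comp_preimage_emb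
      (measurableEmbedding_addRight V₀)
      (fun v => μ {ω | v < X ω} * ENNReal.ofReal (β * exp (β * v))) _
  calc ∫⁻ ω, ENNReal.ofReal (exp (β * X ω)) ∂μ
      ≤ ∫⁻ ω, ENNReal.ofReal (exp (β * V₀)) +
          ENNReal.ofReal (∫ v in 0..(max (X ω) V₀ - V₀), g v) ∂μ := lintegral_mono hpt
    _ = _ := by rw [lintegral_add_left measurable_const, lintegral_const, hlayer, hshift]

section Finite

variable [IsFiniteMeasure μ]

lemma setLIntegral_meas_lt_mul_le {s : Set ℝ} (hs : MeasurableSet s) {F : ℝ → ℝ}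
    (hF : ∀ v ∈ s, (μ {ω | v < X ω}).toReal ≤ F v) (w : ℝ → ENNReal) :
    ∫⁻ v in s, μ {ω | v < X ω} * w v ≤ ∫⁻ v in s, ENNReal.ofReal (F v) * w v :=
  setLIntegral_mono' hs fun v hv => by
    gcongr
    rw [← ENNReal.ofReal_toReal (measure_ne_top μ _)]
    exact ENNReal.ofReal_le_ofReal (hF v hv)

lemma setLIntegral_meas_lt_mul_exp_le_of_gaussian_tail {s : Set ℝ} (hs : MeasurableSet s)
    {β C t : ℝ} (hβ : 0 ≤ β) (hC : 0 ≤ C) (ht : 0 < t)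
    (hF : ∀ v ∈ s, (μ {ω | v < X ω}).toReal ≤ C * exp (-v ^ 2 / t) / √t) :
    ∫⁻ v in s, μ {ω | v < X ω} * ENNReal.ofReal (β * exp (β * v)) ≤
      ENNReal.ofReal (C * β * √π * exp (β ^ 2 * t / 4)) :=
  calc _ ≤ ∫⁻ v in s, ENNReal.ofReal (C * exp (-v ^ 2 / t) / √t) *
          ENNReal.ofReal (β * exp (β * v)) := setLIntegral_meas_lt_mul_le μ hs hF _
    _ = ∫⁻ v in s, ENNReal.ofReal (C * β / √t) * ENNReal.ofReal (exp (β * v - v ^ 2 / t)) := by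
        refine setLIntegral_congr_fun hs fun v _ => ?_
        rw [← ENNReal.ofReal_mul (by positivity), ← ENNReal.ofReal_mul (by positivity),
          sub_eq_add_neg, exp_add, neg_div]
        ring_nf
    _ ≤ ∫⁻ v, ENNReal.ofReal (C * β / √t) * ENNReal.ofReal (exp (β * v - v ^ 2 / t)) :=
        setLIntegral_le_lintegral _ _
    _ = ENNReal.ofReal (C * β * √π * exp (β ^ 2 * t / 4)) := by
        rw [lintegral_const_mul' _ _ ENNReal.ofReal_ne_top,
          lintegral_ofReal_exp_mul_sub_sq_div β ht, ← ENNReal.ofReal_mul (by positivity),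
          sqrt_mul pi_pos.le]
        congr 1
        field_simp

lemma setLIntegral_Ioi_meas_lt_mul_exp_le_of_exp_tail {β κ C a V : ℝ} (hβ : 0 ≤ β)
    (hβκ : β < κ) (hC : 0 ≤ C)
    (hF : ∀ v ∈ Ioi V, (μ {ω | v < X ω}).toReal ≤ C * exp (a - κ * v)) :
    ∫⁻ v in Ioi V, μ {ω | v < X ω} * ENNReal.ofReal (β * exp (β * v)) ≤
      ENNReal.ofReal (C * β / (κ - β) * exp (a - (κ - β) * V)) :=
  calc _ ≤ ∫⁻ v in Ioi V, ENNReal.ofReal (C * exp (a - κ * v)) *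
          ENNReal.ofReal (β * exp (β * v)) := setLIntegral_meas_lt_mul_le μ measurableSet_Ioi hF _
    _ = ∫⁻ v in Ioi V, ENNReal.ofReal (C * β * exp a) * ENNReal.ofReal (exp ((β - κ) * v)) := by
        refine lintegral_congr fun v => ?_
        rw [← ENNReal.ofReal_mul (by positivity), ← ENNReal.ofReal_mul (by positivity)]
        have hexp : exp (a - κ * v) * exp (β * v) = exp a * exp ((β - κ) * v) := by
          rw [← exp_add, ← exp_add]
          ring_nf
        congr 1
        linear_combination C * β * hexp
    _ = ENNReal.ofReal (C * β / (κ - β) * exp (a - (κ - β) * V)) := by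
        rw [lintegral_const_mul' _ _ ENNReal.ofReal_ne_top,
          lintegral_Ioi_ofReal_exp_mul (by linarith), ← ENNReal.ofReal_mul (by positivity)]
        have hexp : exp (a - (κ - β) * V) = exp a * exp ((β - κ) * V) := by
          rw [← exp_add]
          ring_nf
        have hκβ : κ - β ≠ 0 := by linarith
        have hβκ' : β - κ ≠ 0 := by linarith
        rw [hexp]
        congr 1
        field_simp
        ring

end Finite

lemma lintegral_ofReal_exp_mul_le_of_tail_bounds [IsProbabilityMeasure μ] (hX : AEMeasurable X μ)
    {β κ a C₁ C₂ t V₁ V₂ : ℝ} (hβ : 0 ≤ β) (hβκ : β < κ) (hC₁ : 0 ≤ C₁) (hC₂ : 0 ≤ C₂)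
    (ht : 0 < t) (hV : V₁ ≤ V₂)
    (hgauss : ∀ v ∈ Ioc V₁ V₂, (μ {ω | v < X ω}).toReal ≤ C₂ * exp (-v ^ 2 / t) / √t)
    (htail : ∀ v ∈ Ioi V₂, (μ {ω | v < X ω}).toReal ≤ C₁ * exp (a - κ * v)) :
    ∫⁻ ω, ENNReal.ofReal (exp (β * X ω)) ∂μ ≤ ENNReal.ofReal (exp (β * V₁) +
      C₂ * β * √π * exp (β ^ 2 * t / 4) + C₁ * β / (κ - β) * exp (a - (κ - β) * V₂)) := by
  calc ∫⁻ ω, ENNReal.ofReal (exp (β * X ω)) ∂μ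
      ≤ ENNReal.ofReal (exp (β * V₁)) +
          ((∫⁻ v in Ioc V₁ V₂, μ {ω | v < X ω} * ENNReal.ofReal (β * exp (β * v))) +
            ∫⁻ v in Ioi V₂, μ {ω | v < X ω} * ENNReal.ofReal (β * exp (β * v))) := by
        rw [← lintegral_union measurableSet_Ioi Ioc_disjoint_Ioi_same, Ioc_union_Ioi_eq_Ioi hV]
        simpa using lintegral_ofReal_exp_mul_le μ hX hβ V₁
    _ ≤ _ := by
        rw [ENNReal.ofReal_add (by positivity) (by positivity),
          ENNReal.ofReal_add (by positivity) (by positivity), add_assoc]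
        gcongr
        · exact setLIntegral_meas_lt_mul_exp_le_of_gaussian_tail μ measurableSet_Ioc hβ hC₂ ht
            hgauss
        · exact setLIntegral_Ioi_meas_lt_mul_exp_le_of_exp_tail μ hβ hβκ hC₁ htail

end

theorem stmt_7 (β C₁ C₂ : ℝ) (hβ : 0 < β) (hβ4 : β < 4) (hC₁ : 0 < C₁) (hC₂ : 0 < C₂) :
    ∃ C : ℝ, 0 < C ∧
      ∀ (t : ℝ), 1 ≤ t →
      ∀ (Ω : Type) (_ : MeasurableSpace Ω) (μ : Measure Ω), IsProbabilityMeasure μ →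
      ∀ (X : Ω → ℝ), Measurable X →
      (∀ V : ℝ, (μ {ω | X ω > V}).toReal ≤ C₁ * Real.exp (4 * t - 4 * V)) →
      (∀ V : ℝ, V ∈ Set.Icc (β * t / 8) ((3 + β / 4) * t / 2) →
        (μ {ω | X ω > V}).toReal ≤ C₂ * Real.exp (-V ^ 2 / t) / Real.sqrt t) →
      ∫ ω, Real.exp (β * X ω) ∂μ ≤ C * Real.exp (β ^ 2 * t / 4) := by
  refine ⟨1 + C₂ * β * √π + C₁ * β / (4 - β), by positivity, ?_⟩
  intro t ht Ω _ μ _ X hX hTail hGauss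
  have hbound := lintegral_ofReal_exp_mul_le_of_tail_bounds μ hX.aemeasurable hβ.le hβ4 hC₁.le
    hC₂.le (by linarith) (V₁ := β * t / 8) (V₂ := (3 + β / 4) * t / 2) (by nlinarith)
    (fun v hv => hGauss v (Ioc_subset_Icc_self hv)) (fun v _ => hTail v)
  have h₁ : exp (β * (β * t / 8)) ≤ exp (β ^ 2 * t / 4) := exp_le_exp.2 (by nlinarith)
  -- the two exponents differ by `(4 - β) ^ 2 * t / 8`
  have h₂ : exp (4 * t - (4 - β) * ((3 + β / 4) * t / 2)) ≤ exp (β ^ 2 * t / 4) :=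
    exp_le_exp.2 (by nlinarith [sq_nonneg (4 - β)])
  rw [integral_eq_lintegral_of_nonneg_ae (.of_forall fun ω => (exp_pos _).le) (by fun_prop)]
  refine ENNReal.toReal_le_of_le_ofReal (by positivity) (hbound.trans (ENNReal.ofReal_le_ofReal ?_))
  calc _ ≤ exp (β ^ 2 * t / 4) + C₂ * β * √π * exp (β ^ 2 * t / 4) +
        C₁ * β / (4 - β) * exp (β ^ 2 * t / 4) := by gcongr
    _ = _ := by ring
end

section
/- For every integer ν ≥ 1 and reals Δ ≥ 2, A ≥ 10, if ν = ⌈Δ^{10A}⌉ then (2π)^ν/ν! · 2 Δ^{2A(ν+1)} ≤ (100)^ν/ν^ν · Δ^{3Aν} ≤ exp(−Δ^{4A}). -/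
open Real

lemma pow_self_le_exp_mul_factorial (n : ℕ) :
    (n : ℝ) ^ n ≤ Real.exp n * n.factorial := by
  have h := Real.sum_le_exp_of_nonneg (x := (n : ℝ)) (Nat.cast_nonneg n) (n + 1)
  have h2 : (n : ℝ) ^ n / n.factorial ≤ Real.exp n := by
    refine le_trans ?_ h
    refine Finset.single_le_sum (f := fun i => (n : ℝ) ^ i / i.factorial) ?_ ?_
    · intro i _; positivity
    · simp
  have hf : (0 : ℝ) < n.factorial := by positivity
  calc (n : ℝ) ^ n = (n : ℝ) ^ n / n.factorial * n.factorial := by field_simp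
    _ ≤ Real.exp n * n.factorial := by gcongr

theorem stmt_12 (Δ A : ℝ) (hΔ : 2 ≤ Δ) (hA : 10 ≤ A) (ν : ℕ)
    (hν : ν = ⌈Δ ^ (10 * A)⌉₊) :
    (2 * Real.pi) ^ ν / (ν.factorial : ℝ) * (2 * Δ ^ (2 * A * (ν + 1)))
      ≤ (100 : ℝ) ^ ν / (ν : ℝ) ^ ν * Δ ^ (3 * A * ν) ∧
    (100 : ℝ) ^ ν / (ν : ℝ) ^ ν * Δ ^ (3 * A * ν) ≤ Real.exp (-Δ ^ (4 * A)) := by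
  have hΔ0 : (0:ℝ) < Δ := by linarith
  have hΔ1 : (1:ℝ) < Δ := by linarith
  have hlogΔ : Real.log 2 ≤ Real.log Δ := Real.log_le_log (by norm_num) hΔ
  have hlog2 : (0.6931471803 : ℝ) < Real.log 2 := Real.log_two_gt_d9
  have hceil : Δ ^ (10 * A) ≤ (ν : ℝ) := hν ▸ Nat.le_ceil _
  have hApow : ∀ c : ℝ, 0 ≤ c → (2:ℝ)^(c*A) ≤ Δ ^ (c*A) :=
    fun c hc => Real.rpow_le_rpow (by norm_num) hΔ (by positivity)
  have hbig : ∀ c : ℝ, 1 ≤ c → (2:ℝ)^(10:ℝ) ≤ Δ ^ (c * A) := by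
    intro c hc
    calc (2:ℝ)^(10:ℝ) ≤ (2:ℝ)^(c*A) := by
          apply Real.rpow_le_rpow_of_exponent_le (by norm_num); nlinarith
      _ ≤ Δ ^ (c*A) := hApow c (by linarith)
  have h2ten : ((1024:ℝ)) = (2:ℝ)^(10:ℝ) := by
    rw [show ((10:ℝ)) = ((10:ℕ):ℝ) by norm_num, Real.rpow_natCast]; norm_num
  have hν4 : (4:ℝ) ≤ (ν:ℝ) := by
    have := hbig 10 (by norm_num)
    have h1 : Δ ^ ((10:ℝ)*A) = Δ ^ (10*A) := by norm_num
    nlinarith [hceil]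
  have hνpos : (0:ℝ) < ν := by linarith
  have hDA : (1024:ℝ) ≤ Δ ^ A := by
    have := hbig 1 le_rfl; rw [one_mul] at this; linarith [h2ten ▸ this]
  have hπ := Real.pi_pos
  constructor
  · -- first inequality
    have key1 : (2*Real.pi)^ν / (ν.factorial : ℝ) ≤ (18:ℝ)^ν / (ν:ℝ)^ν := by
      rw [div_le_div_iff₀ (by positivity) (by positivity)]
      calc (2*Real.pi)^ν * (ν:ℝ)^ν
          ≤ (2*Real.pi)^ν * (Real.exp ν * ν.factorial) := by
            gcongr
            exact pow_self_le_exp_mul_factorial ν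
        _ = (2*Real.pi*Real.exp 1)^ν * ν.factorial := by
            rw [mul_pow, ← Real.exp_one_rpow (ν:ℝ), Real.rpow_natCast]; ring
        _ ≤ (18:ℝ)^ν * ν.factorial := by
            gcongr
            nlinarith [Real.pi_lt_d2, Real.exp_one_lt_d9, Real.exp_one_gt_d9, hπ]
    have hsplit : Δ^(3*A*(ν:ℝ)) = Δ^(2*A*((ν:ℝ)+1)) * Δ^(A*((ν:ℝ)-2)) := by
      rw [← Real.rpow_add hΔ0]; ring_nf
    have h2le : (2:ℝ) ≤ Δ^(A*((ν:ℝ)-2)) := by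
      have : Δ ^ A ≤ Δ^(A*((ν:ℝ)-2)) := by
        apply Real.rpow_le_rpow_of_exponent_le hΔ1.le; nlinarith
      linarith
    have hX : (0:ℝ) < Δ ^ (2 * A * ((ν:ℝ) + 1)) := by positivity
    calc (2*Real.pi)^ν / (ν.factorial : ℝ) * (2 * Δ ^ (2 * A * ((ν:ℝ) + 1)))
        ≤ (18:ℝ)^ν / (ν:ℝ)^ν * (2 * Δ ^ (2 * A * ((ν:ℝ) + 1))) := by
          apply mul_le_mul_of_nonneg_right key1; positivity
      _ ≤ (100:ℝ)^ν / (ν:ℝ)^ν * Δ ^ (3 * A * (ν:ℝ)) := by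
          rw [hsplit, div_mul_eq_mul_div, div_mul_eq_mul_div]
          gcongr (?_ : ℝ) / _
          have h18 : ((18:ℝ))^ν ≤ 100^ν := by
            apply pow_le_pow_left₀ <;> norm_num
          have h2X : (2:ℝ) * Δ ^ (2 * A * ((ν:ℝ) + 1))
              ≤ Δ ^ (2 * A * ((ν:ℝ) + 1)) * Δ ^ (A * ((ν:ℝ) - 2)) := by
            nlinarith [hX]
          exact mul_le_mul h18 h2X (by positivity) (by positivity)
  · -- second inequality
    have h1 : (100:ℝ)^ν ≤ Δ^(6*A*(ν:ℝ)) := by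
      have h100 : (100:ℝ) ≤ Δ^(6*A) := by
        have : Δ ^ A ≤ Δ^(6*A) := by
          apply Real.rpow_le_rpow_of_exponent_le hΔ1.le; nlinarith
        linarith
      calc (100:ℝ)^ν ≤ (Δ^(6*A))^ν := by
            apply pow_le_pow_left₀ (by norm_num) h100
        _ = Δ^(6*A*(ν:ℝ)) := by
            rw [← Real.rpow_natCast (Δ^(6*A)) ν, ← Real.rpow_mul hΔ0.le]
    have h2 : Δ^(10*A*(ν:ℝ)) ≤ (ν:ℝ)^ν := by
      calc Δ^(10*A*(ν:ℝ)) = (Δ^(10*A))^ν := by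
            rw [← Real.rpow_natCast (Δ^(10*A)) ν, ← Real.rpow_mul hΔ0.le]
        _ ≤ (ν:ℝ)^ν := by
            apply pow_le_pow_left₀ (by positivity) hceil
    have hmid : (100:ℝ)^ν/(ν:ℝ)^ν * Δ^(3*A*(ν:ℝ)) ≤ Δ^(-(A*(ν:ℝ))) := by
      rw [div_mul_eq_mul_div, div_le_iff₀ (by positivity)]
      calc (100:ℝ)^ν * Δ^(3*A*(ν:ℝ)) ≤ Δ^(6*A*(ν:ℝ)) * Δ^(3*A*(ν:ℝ)) := by
            gcongr
        _ = Δ^(-(A*(ν:ℝ))) * Δ^(10*A*(ν:ℝ)) := by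
            rw [← Real.rpow_add hΔ0, ← Real.rpow_add hΔ0]; ring_nf
        _ ≤ Δ^(-(A*(ν:ℝ))) * (ν:ℝ)^ν := by gcongr
    refine hmid.trans ?_
    rw [Real.rpow_def_of_pos hΔ0, Real.exp_le_exp]
    have hlA : (1:ℝ) ≤ A * Real.log Δ := by nlinarith
    have h4 : Δ^(4*A) ≤ Δ^(10*A) := by
      apply Real.rpow_le_rpow_of_exponent_le hΔ1.le; nlinarith
    nlinarith [Real.rpow_pos_of_pos hΔ0 (4*A)]
end

section
/- Let N be a standard-type Gaussian random variable with mean 0 and variance σ² = (t_j − t_{j−1})/2, and let u be real with |u| < 4Δ where Δ = t_j − t_{j−1} ≥ 2, and let A ≥ 10. Then P(N − u ∈ [−Δ^{−A/2}, Δ^{−1} + Δ^{−A/2}]) = P(N − u ∈ [0, Δ^{−1}]) · (1 + O(Δ^{−A/4})). -/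
open MeasureTheory ProbabilityTheory

theorem stmt_16 :
    ∃ C : ℝ, 0 < C ∧
      ∀ (Δ u A : ℝ), 2 ≤ Δ → 10 ≤ A → |u| < 4 * Δ →
        |((gaussianReal 0 (Δ / 2).toNNReal)
            (Set.Icc (u - Δ ^ (-(A / 2))) (u + Δ⁻¹ + Δ ^ (-(A / 2))))).toReal
          - ((gaussianReal 0 (Δ / 2).toNNReal) (Set.Icc u (u + Δ⁻¹))).toReal|
        ≤ C * Δ ^ (-(A / 4))
          * ((gaussianReal 0 (Δ / 2).toNNReal) (Set.Icc u (u + Δ⁻¹))).toReal := by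
  refine ⟨2 * Real.exp 18, by positivity, ?_⟩
  intro Δ u A hΔ hA hu
  have hΔ0 : (0:ℝ) < Δ := by linarith
  set v : NNReal := (Δ / 2).toNNReal with hv
  have hvne : v ≠ 0 := by
    simp only [hv, ne_eq, Real.toNNReal_eq_zero, not_le]
    linarith
  have hvcoe : (v : ℝ) = Δ / 2 := Real.coe_toNNReal _ (by linarith)
  set ε : ℝ := Δ ^ (-(A/2)) with hε
  have hεpos : 0 < ε := Real.rpow_pos_of_pos hΔ0 _
  have hεδ : ε ≤ Δ⁻¹ := by
    have h1 : ε ≤ Δ ^ (-1 : ℝ) :=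
      Real.rpow_le_rpow_of_exponent_le (by linarith) (by linarith)
    rwa [Real.rpow_neg_one] at h1
  have hδpos : (0:ℝ) < Δ⁻¹ := by positivity
  have hδhalf : Δ⁻¹ ≤ 1/2 := by
    rw [inv_le_comm₀ hΔ0 (by norm_num)]
    linarith
  have hε1 : ε ≤ 1/2 := hεδ.trans hδhalf
  set f : ℝ → ℝ := gaussianPDFReal 0 v with hf
  have hfx : ∀ x : ℝ, f x = (Real.sqrt (2 * Real.pi * ↑v))⁻¹ * Real.exp (-x^2 / Δ) := by
    intro x
    rw [hf, gaussianPDFReal]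
    congr 2
    rw [sub_zero, hvcoe]
    ring
  have hcpos : (0:ℝ) < (Real.sqrt (2 * Real.pi * ↑v))⁻¹ := by
    have : (0:ℝ) < (v:ℝ) := by rw [hvcoe]; linarith
    positivity
  have hu' := abs_lt.mp hu
  -- difference of squares bound on the window
  have habs : ∀ x ∈ Set.Icc (u-1) (u+1), u^2 - x^2 ≤ 9*Δ ∧ x^2 - u^2 ≤ 9*Δ := by
    intro x hx
    obtain ⟨hx1, hx2⟩ := hx
    constructor <;> nlinarith [hu'.1, hu'.2]
  have key_up : ∀ x ∈ Set.Icc (u-1) (u+1), f x ≤ Real.exp 9 * f u := by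
    intro x hx
    rw [hfx x, hfx u]
    have h1 : Real.exp (-x^2/Δ) ≤ Real.exp 9 * Real.exp (-u^2/Δ) := by
      rw [← Real.exp_add]
      apply Real.exp_le_exp.mpr
      have h2 : (u^2 - x^2)/Δ ≤ 9 := by
        rw [div_le_iff₀ hΔ0]; nlinarith [(habs x hx).1]
      have h3 : (u^2 - x^2)/Δ = u^2/Δ - x^2/Δ := sub_div _ _ _
      rw [neg_div, neg_div]
      linarith
    calc (Real.sqrt (2 * Real.pi * ↑v))⁻¹ * Real.exp (-x^2/Δ)
        ≤ (Real.sqrt (2 * Real.pi * ↑v))⁻¹ * (Real.exp 9 * Real.exp (-u^2/Δ)) :=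
          mul_le_mul_of_nonneg_left h1 hcpos.le
      _ = Real.exp 9 * ((Real.sqrt (2 * Real.pi * ↑v))⁻¹ * Real.exp (-u^2/Δ)) := by ring
  have key_lo : ∀ x ∈ Set.Icc (u-1) (u+1), Real.exp (-9) * f u ≤ f x := by
    intro x hx
    rw [hfx x, hfx u]
    have h1 : Real.exp (-9) * Real.exp (-u^2/Δ) ≤ Real.exp (-x^2/Δ) := by
      rw [← Real.exp_add]
      apply Real.exp_le_exp.mpr
      have h2 : (x^2 - u^2)/Δ ≤ 9 := by
        rw [div_le_iff₀ hΔ0]; nlinarith [(habs x hx).2]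
      have h3 : (x^2 - u^2)/Δ = x^2/Δ - u^2/Δ := sub_div _ _ _
      rw [neg_div, neg_div]
      linarith
    calc Real.exp (-9) * ((Real.sqrt (2 * Real.pi * ↑v))⁻¹ * Real.exp (-u^2/Δ))
        = (Real.sqrt (2 * Real.pi * ↑v))⁻¹ * (Real.exp (-9) * Real.exp (-u^2/Δ)) := by ring
      _ ≤ (Real.sqrt (2 * Real.pi * ↑v))⁻¹ * Real.exp (-x^2/Δ) :=
          mul_le_mul_of_nonneg_left h1 hcpos.le
  have hint : ∀ a b : ℝ, IntervalIntegrable f volume a b :=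
    fun a b => (integrable_gaussianPDFReal 0 v).intervalIntegrable
  have meas_eq : ∀ a b : ℝ, a ≤ b →
      ((gaussianReal 0 v) (Set.Icc a b)).toReal = ∫ x in a..b, f x := by
    intro a b hab
    rw [gaussianReal_apply_eq_integral 0 hvne,
      ENNReal.toReal_ofReal (setIntegral_nonneg measurableSet_Icc
        fun x _ => gaussianPDFReal_nonneg _ _ _),
      intervalIntegral.integral_of_le hab, MeasureTheory.integral_Icc_eq_integral_Ioc]
  -- abbreviations
  have hle1 : u - ε ≤ u := by linarith
  have hle2 : u ≤ u + Δ⁻¹ := by linarith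
  have hle3 : u + Δ⁻¹ ≤ u + Δ⁻¹ + ε := by linarith
  have split : (∫ x in (u-ε)..(u+Δ⁻¹+ε), f x)
      = (∫ x in (u-ε)..u, f x) + (∫ x in u..(u+Δ⁻¹), f x)
        + (∫ x in (u+Δ⁻¹)..(u+Δ⁻¹+ε), f x) := by
    have s1 := intervalIntegral.integral_add_adjacent_intervals (hint (u-ε) u) (hint u (u+Δ⁻¹))
    have s2 := intervalIntegral.integral_add_adjacent_intervals (hint (u-ε) (u+Δ⁻¹))
      (hint (u+Δ⁻¹) (u+Δ⁻¹+ε))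
    linarith
  have strip1 : (∫ x in (u-ε)..u, f x) ≤ ε * (Real.exp 9 * f u) := by
    calc (∫ x in (u-ε)..u, f x) ≤ ∫ _ in (u-ε)..u, Real.exp 9 * f u :=
          intervalIntegral.integral_mono_on hle1 (hint _ _) intervalIntegrable_const
            (fun x hx => key_up x ⟨by linarith [hx.1], by linarith [hx.2]⟩)
      _ = ε * (Real.exp 9 * f u) := by
          rw [intervalIntegral.integral_const, smul_eq_mul]; ring
  have strip2 : (∫ x in (u+Δ⁻¹)..(u+Δ⁻¹+ε), f x) ≤ ε * (Real.exp 9 * f u) := by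
    calc (∫ x in (u+Δ⁻¹)..(u+Δ⁻¹+ε), f x) ≤ ∫ _ in (u+Δ⁻¹)..(u+Δ⁻¹+ε), Real.exp 9 * f u :=
          intervalIntegral.integral_mono_on hle3 (hint _ _) intervalIntegrable_const
            (fun x hx => key_up x ⟨by linarith [hx.1], by linarith [hx.2]⟩)
      _ = ε * (Real.exp 9 * f u) := by
          rw [intervalIntegral.integral_const, smul_eq_mul]; ring
  have main_lo : Δ⁻¹ * (Real.exp (-9) * f u) ≤ ∫ x in u..(u+Δ⁻¹), f x := by
    calc Δ⁻¹ * (Real.exp (-9) * f u) = ∫ _ in u..(u+Δ⁻¹), Real.exp (-9) * f u := by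
          rw [intervalIntegral.integral_const, smul_eq_mul]; ring
      _ ≤ ∫ x in u..(u+Δ⁻¹), f x :=
          intervalIntegral.integral_mono_on hle2 intervalIntegrable_const (hint _ _)
            (fun x hx => key_lo x ⟨by linarith [hx.1], by linarith [hx.2]⟩)
  have s1nn : 0 ≤ ∫ x in (u-ε)..u, f x :=
    intervalIntegral.integral_nonneg hle1 (fun x _ => gaussianPDFReal_nonneg _ _ _)
  have s2nn : 0 ≤ ∫ x in (u+Δ⁻¹)..(u+Δ⁻¹+ε), f x :=
    intervalIntegral.integral_nonneg hle3 (fun x _ => gaussianPDFReal_nonneg _ _ _)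
  rw [meas_eq (u-ε) (u+Δ⁻¹+ε) (by linarith), meas_eq u (u+Δ⁻¹) hle2, split]
  rw [abs_of_nonneg (by linarith)]
  have hfu : 0 < f u := gaussianPDFReal_pos _ _ _ hvne
  have hpow : (0:ℝ) < Δ ^ (-(A/4)) := Real.rpow_pos_of_pos hΔ0 _
  have hkey : ε ≤ Δ⁻¹ * Δ ^ (-(A/4)) := by
    have h1 : ε ≤ Δ ^ ((-1 : ℝ) + -(A/4)) :=
      Real.rpow_le_rpow_of_exponent_le (by linarith) (by linarith)
    rwa [Real.rpow_add hΔ0, Real.rpow_neg_one] at h1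
  have hexp : Real.exp 9 = Real.exp 18 * Real.exp (-9) := by
    rw [← Real.exp_add]; norm_num
  calc (∫ x in (u-ε)..u, f x) + (∫ x in u..(u+Δ⁻¹), f x)
        + (∫ x in (u+Δ⁻¹)..(u+Δ⁻¹+ε), f x) - (∫ x in u..(u+Δ⁻¹), f x)
      ≤ 2 * (ε * (Real.exp 9 * f u)) := by linarith
    _ ≤ 2 * ((Δ⁻¹ * Δ ^ (-(A/4))) * (Real.exp 9 * f u)) := by
        have : (0:ℝ) ≤ Real.exp 9 * f u := by positivity
        nlinarith
    _ = 2 * Real.exp 18 * Δ ^ (-(A/4)) * (Δ⁻¹ * (Real.exp (-9) * f u)) := by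
        rw [hexp]; ring
    _ ≤ 2 * Real.exp 18 * Δ ^ (-(A/4)) * ∫ x in u..(u+Δ⁻¹), f x := by
        have h2 : (0:ℝ) ≤ 2 * Real.exp 18 * Δ ^ (-(A/4)) := by positivity
        exact mul_le_mul_of_nonneg_left main_lo h2
end
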